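/- arXiv:1212.5890 — 3 statements merged into one kernel-verified Lean document; each statement's English description precedes it below -/
import Mathlib

section
/- Let L : ℂ → ℂ be hybridly universal, let K ⊂ D be a compact set with connected complement, and let f be continuous and non-vanishing on K and analytic in the interior of K. Let d ≥ 1 and c_0, …, c_d ∈ 𝒟 with c_d not identically zero, and write P_s(z) := Σ_{j=0}^d c_j(s) z^j. Then for every ε > 0, liminf_{T→∞} ν_T{ max_{s∈K} | P_{s+iτ}(L(s+iτ)) − P_s(f(s)) | < ε } > 0. -/
open MeasureTheory Filter Complex Set Finset

noncomputable def lowerDensity (P : ℝ → Prop) : ℝ :=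
  Filter.liminf (fun T : ℝ =>
    (MeasureTheory.volume {τ ∈ Set.Icc (0:ℝ) T | P τ}).toReal / T) Filter.atTop

noncomputable def distToInt (x : ℝ) : ℝ := |x - round x|

def stripD : Set ℂ := {s : ℂ | 1/2 < s.re ∧ s.re < 1}

def IsGenDirichletSeries (A : ℂ → ℂ) : Prop :=
  ∃ (a : ℕ → ℂ) (lam : ℕ → ℝ),
    ∀ s : ℂ, 1/2 < s.re →
      Summable (fun n => ‖a n * Complex.exp (-(lam n : ℂ) * s)‖) ∧
      A s = ∑' n, a n * Complex.exp (-(lam n : ℂ) * s)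

def HybridUniversal (L : ℂ → ℂ) : Prop :=
  ∀ K : Set ℂ, IsCompact K → K ⊆ stripD → IsPreconnected Kᶜ →
    ∀ f : ℂ → ℂ, ContinuousOn f K → (∀ s ∈ K, f s ≠ 0) →
      DifferentiableOn ℂ f (interior K) →
      ∀ (k : ℕ) (α θ : Fin k → ℝ), LinearIndependent ℚ α →
        ∀ ε : ℝ, 0 < ε →
          0 < lowerDensity (fun τ =>
            (∀ s ∈ K, Norm.norm (L (s + τ * Complex.I) - f s) < ε) ∧
            ∀ j, distToInt (τ * α j - θ j) < ε)

def HybridStronglyUniversal (L : ℂ → ℂ) : Prop :=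
  ∀ K : Set ℂ, IsCompact K → K ⊆ stripD → IsPreconnected Kᶜ →
    ∀ f : ℂ → ℂ, ContinuousOn f K →
      DifferentiableOn ℂ f (interior K) →
      ∀ (k : ℕ) (α θ : Fin k → ℝ), LinearIndependent ℚ α →
        ∀ ε : ℝ, 0 < ε →
          0 < lowerDensity (fun τ =>
            (∀ s ∈ K, Norm.norm (L (s + τ * Complex.I) - f s) < ε) ∧
            ∀ j, distToInt (τ * α j - θ j) < ε)

def zeroRect (F : ℂ → ℂ) (σ₁ σ₂ T : ℝ) : Set ℂ :=
  {s : ℂ | F s = 0 ∧ σ₁ < s.re ∧ s.re < σ₂ ∧ 0 < s.im ∧ s.im < T}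

/-!
Shifting a general Dirichlet series `∑ aₙ e^{-λₙ s}` by `iτ` multiplies its `n`-th term by
`e^{-iλₙτ}`, which is close to `1` when `τλₙ/2π` is close to an integer. On a closed vertical
strip in `Re s > 1/2` the tail of the series is uniformly small, so `c_j(s + iτ) ≈ c_j(s)` as soon
as `τμ` is close to an integer for finitely many `μ`. These `μ` are integer combinations of
finitely many ℚ-linearly independent reals `αᵢ`, so hybrid universality with `θ = 0` gives a set
of `τ` of positive lower density on which both `L(s + iτ) ≈ f(s)` and `c_j(s + iτ) ≈ c_j(s)`
uniformly on `K`. Uniform continuity of `(c, z) ↦ ∑ c_j z^j` near a bounded set concludes.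
-/

lemma volume_sep_Icc_le (R : ℝ → Prop) (T : ℝ) :
    volume {τ ∈ Icc (0 : ℝ) T | R τ} ≤ ENNReal.ofReal T := by
  simpa [Real.volume_Icc] using measure_mono (μ := volume) (sep_subset (Icc (0 : ℝ) T) R)

lemma lowerDensity_mono {P Q : ℝ → Prop} (h : ∀ τ, P τ → Q τ) :
    lowerDensity P ≤ lowerDensity Q := by
  have hle_one : ∀ R : ℝ → Prop, ∀ᶠ T in atTop,
      (volume {τ ∈ Icc (0 : ℝ) T | R τ}).toReal / T ≤ 1 :=
    fun R => (eventually_gt_atTop 0).mono fun T hT => (div_le_one hT).2 <| by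
      simpa [hT.le] using ENNReal.toReal_mono ENNReal.ofReal_ne_top (volume_sep_Icc_le R T)
  refine liminf_le_liminf ((eventually_gt_atTop 0).mono fun T hT => ?_)
    (isBoundedUnder_of_eventually_ge (a := 0) ((eventually_gt_atTop 0).mono fun T hT => by
      positivity))
    (isCoboundedUnder_ge_of_eventually_le _ (hle_one Q))
  gcongr
  · exact ne_top_of_le_ne_top ENNReal.ofReal_ne_top (volume_sep_Icc_le Q T)
  · exact h _

lemma distToInt_sum_int_mul_le {ι : Type*} (s : Finset ι) (p : ι → ℤ) (x : ι → ℝ) :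
    distToInt (∑ i ∈ s, p i * x i) ≤ ∑ i ∈ s, |(p i : ℝ)| * distToInt (x i) :=
  calc distToInt (∑ i ∈ s, p i * x i)
      ≤ |∑ i ∈ s, p i * x i - ((∑ i ∈ s, p i * round (x i) : ℤ) : ℝ)| := round_le _ _
    _ = |∑ i ∈ s, (p i : ℝ) * (x i - round (x i))| := by
      push_cast; rw [← sum_sub_distrib]; simp only [mul_sub]
    _ ≤ ∑ i ∈ s, |(p i : ℝ) * (x i - round (x i))| := abs_sum_le_sum_abs _ _
    _ = ∑ i ∈ s, |(p i : ℝ)| * distToInt (x i) := by simp only [abs_mul, distToInt]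

lemma norm_exp_two_pi_mul_I_sub_one_le (x : ℝ) :
    ‖exp (2 * Real.pi * x * I) - 1‖ ≤ 2 * Real.pi * distToInt x := by
  have hperiod : exp (2 * Real.pi * x * I) = exp (I * ↑(2 * Real.pi * (x - round x))) := by
    rw [show I * ↑(2 * Real.pi * (x - round x)) =
        2 * Real.pi * x * I + (-round x : ℤ) * (2 * Real.pi * I) by push_cast; ring,
      exp_add, exp_int_mul_two_pi_mul_I, mul_one]
  rw [hperiod]
  refine Real.norm_exp_I_mul_ofReal_sub_one_le.trans_eq ?_
  rw [Real.norm_eq_abs, abs_mul, abs_of_pos Real.two_pi_pos, distToInt]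

lemma norm_exp_two_pi_mul_I_sub_one_le_two (x : ℝ) : ‖exp (2 * Real.pi * x * I) - 1‖ ≤ 2 := by
  refine (norm_sub_le _ _).trans_eq ?_
  rw [← ofReal_ofNat, ← ofReal_mul, ← ofReal_mul, norm_exp_ofReal_mul_I, norm_one]
  norm_num

lemma exp_neg_mul_add_mul_I (l τ : ℝ) (s : ℂ) :
    exp (-(l : ℂ) * (s + τ * I)) =
      exp (-(l : ℂ) * s) * exp (2 * Real.pi * ↑(τ * (-l / (2 * Real.pi))) * I) := by
  rw [← exp_add]
  congr 1
  push_cast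
  field_simp
  ring

lemma exists_linearIndependent_int_combination (S : Finset ℝ) :
    ∃ (k : ℕ) (α : Fin k → ℝ), LinearIndependent ℚ α ∧
      ∀ x ∈ S, ∃ p : Fin k → ℤ, x = ∑ i, p i * α i := by
  let W := Submodule.span ℤ (S : Set ℝ)
  let b := Module.finBasis ℤ W
  refine ⟨_, fun i => b i, ?_, fun x hx => ⟨b.repr ⟨x, Submodule.subset_span hx⟩, ?_⟩⟩
  · exact (LinearIndependent.iff_fractionRing ℤ ℚ).1
      (b.linearIndependent.map' W.subtype W.ker_subtype)
  · have h := congrArg Subtype.val (b.sum_repr ⟨x, Submodule.subset_span hx⟩)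
    rw [Submodule.coe_sum] at h
    simp only [SetLike.val_smul, zsmul_eq_mul] at h
    exact h.symm

lemma exists_linearIndependent_distToInt_control (S : Finset ℝ) :
    ∃ (k : ℕ) (α : Fin k → ℝ), LinearIndependent ℚ α ∧ ∀ ρ > 0, ∃ δ > 0, ∀ τ : ℝ,
      (∀ i, distToInt (τ * α i) < δ) → ∀ x ∈ S, distToInt (τ * x) < ρ := by
  obtain ⟨k, α, hα, hS⟩ := exists_linearIndependent_int_combination S
  choose! p hp using hS
  refine ⟨k, α, hα, fun ρ hρ => ?_⟩
  set P := ∑ x ∈ S, ∑ i, |(p x i : ℝ)|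
  refine ⟨ρ / (P + 1), by positivity, fun τ hτ x hx => ?_⟩
  have hPx : ∑ i, |(p x i : ℝ)| ≤ P :=
    single_le_sum (f := fun x => ∑ i, |(p x i : ℝ)|) (fun _ _ => by positivity) hx
  calc distToInt (τ * x) = distToInt (∑ i, p x i * (τ * α i)) := by
        conv_lhs => rw [hp x hx, mul_sum]
        simp only [mul_left_comm]
    _ ≤ ∑ i, |(p x i : ℝ)| * distToInt (τ * α i) := distToInt_sum_int_mul_le _ _ _
    _ ≤ ∑ i, |(p x i : ℝ)| * (ρ / (P + 1)) := by gcongr with i; exact (hτ i).le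
    _ ≤ P * (ρ / (P + 1)) := by rw [← sum_mul]; gcongr
    _ < ρ := by
      rw [mul_div_assoc', div_lt_iff₀ (by positivity)]
      nlinarith

lemma norm_tsum_le_of_le_mul {E : Type*} [SeminormedAddCommGroup E] {h : ℕ → E} {g : ℕ → ℝ}
    (hg : Summable g) (hg0 : ∀ n, 0 ≤ g n) {N : ℕ} {κ C : ℝ} (hκ : 0 ≤ κ)
    (hhead : ∀ n < N, ‖h n‖ ≤ κ * g n) (hall : ∀ n, ‖h n‖ ≤ C * g n) :
    ‖∑' n, h n‖ ≤ κ * ∑' n, g n + C * ∑' n, g (n + N) := by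
  have hh : Summable fun n => ‖h n‖ :=
    Summable.of_nonneg_of_le (fun n => norm_nonneg _) hall (hg.mul_left C)
  calc ‖∑' n, h n‖ ≤ ∑' n, ‖h n‖ := norm_tsum_le_tsum_norm hh
    _ = ∑ n ∈ range N, ‖h n‖ + ∑' n, ‖h (n + N)‖ := (hh.sum_add_tsum_nat_add N).symm
    _ ≤ ∑ n ∈ range N, κ * g n + ∑' n, C * g (n + N) :=
      add_le_add (sum_le_sum fun n hn => hhead n (mem_range.1 hn))
        (((summable_nat_add_iff N).2 hh).tsum_le_tsum (fun n => hall _)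
          (((summable_nat_add_iff N).2 hg).mul_left C))
    _ ≤ κ * ∑' n, g n + C * ∑' n, g (n + N) := by
      rw [← mul_sum, tsum_mul_left]
      gcongr
      exact hg.sum_le_tsum _ fun n _ => hg0 n

namespace IsGenDirichletSeries

variable {A : ℂ → ℂ} {σ₀ σ₁ : ℝ}

lemma exists_dominated (hA : IsGenDirichletSeries A) (hσ₀ : 1 / 2 < σ₀) (hσ₁ : 1 / 2 < σ₁) :
    ∃ (a : ℕ → ℂ) (lam : ℕ → ℝ) (g : ℕ → ℝ), Summable g ∧ (∀ n, 0 ≤ g n) ∧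
      ∀ s : ℂ, s.re ∈ Icc σ₀ σ₁ → A s = ∑' n, a n * exp (-(lam n : ℂ) * s) ∧
        ∀ n, ‖a n * exp (-(lam n : ℂ) * s)‖ ≤ g n := by
  obtain ⟨a, lam, hal⟩ := hA
  have hnorm : ∀ n (s : ℂ),
      ‖a n * exp (-(lam n : ℂ) * s)‖ = ‖a n‖ * Real.exp (-(lam n * s.re)) := by
    intro n s
    rw [norm_mul, norm_exp]
    simp
  refine ⟨a, lam, fun n => ‖a n * exp (-(lam n : ℂ) * σ₀)‖ + ‖a n * exp (-(lam n : ℂ) * σ₁)‖,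
    (hal σ₀ (by simpa using hσ₀)).1.add (hal σ₁ (by simpa using hσ₁)).1, fun n => by positivity,
    fun s hs => ⟨(hal s (hσ₀.trans_le hs.1)).2, fun n => ?_⟩⟩
  simp only [hnorm, ofReal_re, ← mul_add]
  gcongr
  rcases le_total 0 (lam n) with hl | hl
  · exact le_add_of_le_of_nonneg (Real.exp_le_exp.2 (by nlinarith [hs.1])) (Real.exp_pos _).le
  · exact le_add_of_nonneg_of_le (Real.exp_pos _).le (Real.exp_le_exp.2 (by nlinarith [hs.2]))

lemma exists_bound (hA : IsGenDirichletSeries A) (hσ₀ : 1 / 2 < σ₀) (hσ₁ : 1 / 2 < σ₁) :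
    ∃ B, ∀ s : ℂ, s.re ∈ Icc σ₀ σ₁ → ‖A s‖ ≤ B := by
  obtain ⟨a, lam, g, hg, -, hA⟩ := hA.exists_dominated hσ₀ hσ₁
  exact ⟨∑' n, g n, fun s hs => (hA s hs).1 ▸ tsum_of_norm_bounded hg.hasSum (hA s hs).2⟩

lemma exists_almostPeriod (hA : IsGenDirichletSeries A) (hσ₀ : 1 / 2 < σ₀) (hσ₁ : 1 / 2 < σ₁)
    {η : ℝ} (hη : 0 < η) :
    ∃ S : Finset ℝ, ∃ ρ > 0, ∀ τ : ℝ, (∀ x ∈ S, distToInt (τ * x) < ρ) →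
      ∀ s : ℂ, s.re ∈ Icc σ₀ σ₁ → ‖A (s + τ * I) - A s‖ < η := by
  obtain ⟨a, lam, g, hg, hg0, hA⟩ := hA.exists_dominated hσ₀ hσ₁
  obtain ⟨N, hN⟩ := ((tendsto_sum_nat_add g).eventually_lt_const (by positivity : 0 < η / 4)).exists
  set G := ∑' n, g n
  have hG : 0 ≤ G := tsum_nonneg hg0
  set ρ := η / (4 * Real.pi * (G + 1))
  refine ⟨(range N).image fun n => -lam n / (2 * Real.pi), ρ, by positivity, fun τ hτ s hs => ?_⟩
  have hs' : (s + τ * I).re ∈ Icc σ₀ σ₁ := by simpa using hs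
  set e : ℕ → ℂ := fun n => exp (2 * Real.pi * ↑(τ * (-lam n / (2 * Real.pi))) * I) - 1
  have hsummable : ∀ s : ℂ, s.re ∈ Icc σ₀ σ₁ → Summable fun n => a n * exp (-(lam n : ℂ) * s) :=
    fun s hs => Summable.of_norm_bounded hg (hA s hs).2
  have hdiff : A (s + τ * I) - A s = ∑' n, a n * exp (-(lam n : ℂ) * s) * e n := by
    rw [(hA _ hs').1, (hA s hs).1, ← (hsummable _ hs').tsum_sub (hsummable s hs)]
    exact tsum_congr fun n => by rw [exp_neg_mul_add_mul_I]; ring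
  have he : ∀ n, ‖e n‖ ≤ 2 := fun n => norm_exp_two_pi_mul_I_sub_one_le_two _
  have he_head : ∀ n < N, ‖e n‖ ≤ 2 * Real.pi * ρ := fun n hn =>
    (norm_exp_two_pi_mul_I_sub_one_le _).trans <| by
      gcongr
      exact (hτ _ (mem_image_of_mem _ (mem_range.2 hn))).le
  have hρG : 2 * Real.pi * ρ * G ≤ η / 2 := by
    have : 2 * Real.pi * ρ * G = η / 2 * (G / (G + 1)) := by
      simp only [ρ]
      field_simp
      ring
    rw [this]
    exact mul_le_of_le_one_right (by positivity) ((div_le_one (by positivity)).2 (by linarith))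
  rw [hdiff]
  calc _ ≤ 2 * Real.pi * ρ * G + 2 * ∑' n, g (n + N) :=
        norm_tsum_le_of_le_mul hg hg0 (by positivity)
          (fun n hn => by rw [norm_mul, mul_comm]; gcongr; exacts [he_head n hn, (hA s hs).2 n])
          (fun n => by rw [norm_mul, mul_comm]; gcongr; exacts [he n, (hA s hs).2 n])
    _ < η := by linarith

end IsGenDirichletSeries

lemma exists_common_almostPeriod {ι : Type*} (t : Finset ι) {A : ι → ℂ → ℂ}
    (hA : ∀ j ∈ t, IsGenDirichletSeries (A j)) {σ₀ σ₁ : ℝ} (hσ₀ : 1 / 2 < σ₀)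
    (hσ₁ : 1 / 2 < σ₁) {η : ℝ} (hη : 0 < η) :
    ∃ S : Finset ℝ, ∃ ρ > 0, ∀ τ : ℝ, (∀ x ∈ S, distToInt (τ * x) < ρ) →
      ∀ j ∈ t, ∀ s : ℂ, s.re ∈ Icc σ₀ σ₁ → ‖A j (s + τ * I) - A j s‖ < η := by
  classical
  induction t using Finset.induction_on with
  | empty => exact ⟨∅, 1, one_pos, by simp⟩
  | insert j t _ ih =>
    obtain ⟨S, ρ, hρ, hS⟩ := ih fun i hi => hA i (mem_insert_of_mem hi)
    obtain ⟨S', ρ', hρ', hS'⟩ := (hA j (mem_insert_self j t)).exists_almostPeriod hσ₀ hσ₁ hη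
    refine ⟨S ∪ S', min ρ ρ', lt_min hρ hρ', fun τ hτ i hi => ?_⟩
    rcases mem_insert.1 hi with rfl | hi
    · exact hS' τ fun x hx => (hτ x (mem_union_right _ hx)).trans_le (min_le_right _ _)
    · exact hS τ (fun x hx => (hτ x (mem_union_left _ hx)).trans_le (min_le_left _ _)) i hi

lemma exists_pos_forall_dist_lt_of_isCompact {X Y : Type*} [PseudoMetricSpace X]
    [PseudoMetricSpace Y] {Φ : X → Y} (hΦ : Continuous Φ) {S : Set X} (hS : IsCompact S)
    {ε : ℝ} (hε : 0 < ε) :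
    ∃ δ > 0, ∀ x ∈ S, ∀ y, dist x y < δ → dist (Φ x) (Φ y) < ε := by
  obtain ⟨δ, hδ, h⟩ := Metric.mem_uniformity_dist.1 <| hS.uniformContinuousAt_of_continuousAt Φ
    (fun x _ => hΦ.continuousAt) (Metric.dist_mem_uniformity hε)
  exact ⟨δ, hδ, fun x hx y hxy => h hxy hx⟩

lemma exists_pos_norm_sum_mul_pow_sub_lt (d : ℕ) (M : ℝ) {ε : ℝ} (hε : 0 < ε) :
    ∃ δ > 0, ∀ (a b : ℕ → ℂ) (w z : ℂ), (∀ j ≤ d, ‖a j‖ ≤ M) → ‖w‖ ≤ M →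
      (∀ j ≤ d, ‖b j - a j‖ < δ) → ‖z - w‖ < δ →
      ‖∑ j ∈ range (d + 1), b j * z ^ j - ∑ j ∈ range (d + 1), a j * w ^ j‖ < ε := by
  let Φ : (Fin (d + 1) → ℂ) × ℂ → ℂ := fun p => ∑ j, p.1 j * p.2 ^ (j : ℕ)
  have hΦ : ∀ (a : ℕ → ℂ) w, Φ (fun j => a j, w) = ∑ j ∈ range (d + 1), a j * w ^ j :=
    fun a w => Fin.sum_univ_eq_sum_range (fun j => a j * w ^ j) _
  obtain ⟨δ, hδ, h⟩ := exists_pos_forall_dist_lt_of_isCompact (Φ := Φ) (by fun_prop)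
    (isCompact_closedBall 0 M) hε
  refine ⟨δ, hδ, fun a b w z ha hw hb hz => ?_⟩
  rw [← hΦ, ← hΦ, ← dist_eq_norm, dist_comm]
  refine h _ ?_ _ ?_
  · rw [mem_closedBall_zero_iff, Prod.norm_def, max_le_iff,
      pi_norm_le_iff_of_nonneg ((norm_nonneg w).trans hw)]
    exact ⟨fun j => ha j (Nat.lt_succ_iff.1 j.isLt), hw⟩
  · rw [Prod.dist_eq, max_lt_iff, dist_pi_lt_iff hδ, dist_comm, dist_eq_norm]
    exact ⟨fun j => by rw [dist_comm, dist_eq_norm]; exact hb j (Nat.lt_succ_iff.1 j.isLt), hz⟩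

theorem polynomial_hybrid_approximation_general
    (L : ℂ → ℂ) (hL : HybridUniversal L)
    (K : Set ℂ) (hK : IsCompact K) (hKD : K ⊆ stripD) (hKc : IsPreconnected Kᶜ)
    (f : ℂ → ℂ) (hf : ContinuousOn f K) (hfne : ∀ s ∈ K, f s ≠ 0)
    (hfa : DifferentiableOn ℂ f (interior K))
    (d : ℕ) (c : ℕ → ℂ → ℂ)
    (hc : ∀ j ≤ d, IsGenDirichletSeries (c j)) :
    ∀ ε : ℝ, 0 < ε →
      0 < lowerDensity (fun τ =>
        ∀ s ∈ K, Norm.norm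
          ((∑ j ∈ Finset.range (d + 1),
              c j (s + τ * Complex.I) * L (s + τ * Complex.I) ^ j) -
            ∑ j ∈ Finset.range (d + 1), c j s * f s ^ j) < ε) := by
  intro ε hε
  obtain ⟨σ₀, hσ₀, hKσ₀⟩ := hK.exists_forall_le' continuous_re.continuousOn fun s hs => (hKD hs).1
  have hKre : ∀ s ∈ K, s.re ∈ Icc σ₀ 1 := fun s hs => ⟨hKσ₀ s hs, (hKD hs).2.le⟩
  obtain ⟨F, hF⟩ := hK.exists_bound_of_continuousOn hf
  choose! B hB using fun j (hj : j ≤ d) => (hc j hj).exists_bound hσ₀ one_half_lt_one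
  obtain ⟨M, hM⟩ := (insert F ((range (d + 1)).image B)).exists_le
  have hfM : ∀ s ∈ K, ‖f s‖ ≤ M := fun s hs => (hF s hs).trans (hM F (mem_insert_self _ _))
  have hcM : ∀ j ≤ d, ∀ s ∈ K, ‖c j s‖ ≤ M := fun j hj s hs => (hB j hj s (hKre s hs)).trans
    (hM _ (mem_insert_of_mem (mem_image_of_mem _ (mem_range.2 (Nat.lt_succ_of_le hj)))))
  obtain ⟨δ, hδ, hpoly⟩ := exists_pos_norm_sum_mul_pow_sub_lt d M hε
  obtain ⟨S, ρ, hρ, hS⟩ := exists_common_almostPeriod (range (d + 1))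
    (fun j hj => hc j (Nat.lt_succ_iff.1 (mem_range.1 hj))) hσ₀ one_half_lt_one hδ
  obtain ⟨k, α, hα, hαS⟩ := exists_linearIndependent_distToInt_control S
  obtain ⟨δ', hδ', hδ'S⟩ := hαS ρ hρ
  refine (hL K hK hKD hKc f hf hfne hfa k α 0 hα _ (lt_min hδ hδ')).trans_le
    (lowerDensity_mono ?_)
  rintro τ ⟨hLf, hτα⟩ s hs
  have hτS : ∀ x ∈ S, distToInt (τ * x) < ρ :=
    hδ'S τ fun i => by simpa using (hτα i).trans_le (min_le_right _ _)
  exact hpoly _ _ _ _ (fun j hj => hcM j hj s hs) (hfM s hs)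
    (fun j hj => hS τ hτS j (mem_range.2 (Nat.lt_succ_of_le hj)) s (hKre s hs))
    ((hLf s hs).trans_le (min_le_left _ _))

/-- Theorem 2.1 (polynomial approximation via hybrid universality): if `L` is hybridly
universal, `K ⊂ D` is compact with connected complement, `f` is continuous and
non-vanishing on `K` and analytic in its interior, and `P_s(z) = ∑_{j=0}^d c_j(s) z^j`
with `c_j` absolutely convergent general Dirichlet series and `c_d` not identically zero,
then the set of `τ ∈ [0,T]` with `max_{s ∈ K} |P_{s+iτ}(L(s+iτ)) − P_s(f(s))| < ε` has
positive lower density. -/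
theorem polynomial_hybrid_approximation
    (L : ℂ → ℂ) (hL : HybridUniversal L)
    (K : Set ℂ) (hK : IsCompact K) (hKD : K ⊆ stripD) (hKc : IsPreconnected Kᶜ)
    (f : ℂ → ℂ) (hf : ContinuousOn f K) (hfne : ∀ s ∈ K, f s ≠ 0)
    (hfa : DifferentiableOn ℂ f (interior K))
    (d : ℕ) (hd : 1 ≤ d) (c : ℕ → ℂ → ℂ)
    (hc : ∀ j ≤ d, IsGenDirichletSeries (c j))
    (hlead : ∃ s : ℂ, 1/2 < s.re ∧ c d s ≠ 0) :
    ∀ ε : ℝ, 0 < ε →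
      0 < lowerDensity (fun τ =>
        ∀ s ∈ K, Norm.norm
          ((∑ j ∈ Finset.range (d + 1),
              c j (s + τ * Complex.I) * L (s + τ * Complex.I) ^ j) -
            ∑ j ∈ Finset.range (d + 1), c j s * f s ^ j) < ε) :=
  polynomial_hybrid_approximation_general L hL K hK hKD hKc f hf hfne hfa d c hc
end

section
/- The following are equivalent: (i) for every ε > 0, ζ(1/2 + it) = O(|t|^ε) as |t| → ∞ (the Lindelöf hypothesis for the Riemann zeta function); (ii) for every integer r ≥ 2 and every ε > 0, Z_r(1/2 + it) = O(|t|^ε) as |t| → ∞, where Z_r(s) := (1/r!) · Σ_Π (−1)^{r−|Π|} ( ∏_{B ∈ Π} (|B| − 1)! ) · ∏_{B ∈ Π} ζ(|B|·s), the sum running over all set partitions Π of {1, …, r}. -/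
open Complex Finset

/-- The analytic continuation `Z_r(s)` of the diagonal Euler–Zagier multiple
zeta-function `ζ_r(s,…,s)`, given by Hoffman's relation as an alternating sum over set
partitions of `{1,…,r}` of products of Riemann zeta values. -/
noncomputable def ezDiagonal (r : ℕ) (s : ℂ) : ℂ :=
  (1 / (Nat.factorial r : ℂ)) *
    ∑ P : Finpartition (Finset.univ : Finset (Fin r)),
      (-1 : ℂ) ^ (r - P.parts.card) *
        (∏ B ∈ P.parts, (Nat.factorial (B.card - 1) : ℂ)) *
        ∏ B ∈ P.parts, riemannZeta ((B.card : ℂ) * s)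

/-!
Each zeta value in Hoffman's formula for `Z_r(1/2 + it)` is `ζ(k/2 + ikt)` with `k ≥ 1`. For
`k = 1` the Lindelöf hypothesis bounds it; for `k = 2` it lies on the line `Re s = 1`, where
`ζ(1 + iu) = O(log |u|)`; for `k ≥ 3` it is bounded by absolute convergence. Functions that are
`O(|t|^ε)` for every `ε > 0` form a ring, so `Z_r(1/2 + it)` is one of them. Conversely
`ζ(s)^2 = 2 Z_2(s) + ζ(2s)`, so the bound for `Z_2` gives one for `ζ(1/2 + it)^2`, hence for
`ζ(1/2 + it)`.

For `ζ(1 + iu) = O(log |u|)`, take `1 < σ ≤ 2` and split the Dirichlet series at `N = ⌊|u|⌋`: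
the head is at most the harmonic number `H_N ≤ 1 + log N`, and in the tail each `n^{-s}` differs
from `∫_n^{n+1} x^{-s} dx` by at most `|s| n^{-σ-1}`, so the tail is `O(1)`. Then let `σ → 1`.
-/

def SubpolynomialGrowth (f : ℝ → ℂ) : Prop :=
  ∀ ε : ℝ, 0 < ε → ∃ C : ℝ, 0 < C ∧ ∀ t : ℝ, 1 ≤ |t| → ‖f t‖ ≤ C * |t| ^ ε

namespace SubpolynomialGrowth

variable {f g : ℝ → ℂ}

theorem of_norm_le_add_log {A : ℝ} (hf : ∀ t : ℝ, 1 ≤ |t| → ‖f t‖ ≤ A + Real.log |t|) :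
    SubpolynomialGrowth f := by
  intro ε hε
  refine ⟨|A| + 1 / ε, by positivity, fun t ht => ?_⟩
  have hpow : 1 ≤ |t| ^ ε := Real.one_le_rpow ht hε.le
  calc ‖f t‖ ≤ A + Real.log |t| := hf t ht
    _ ≤ |A| * |t| ^ ε + |t| ^ ε / ε := by
        gcongr
        · exact (le_abs_self A).trans (le_mul_of_one_le_right (abs_nonneg A) hpow)
        · exact Real.log_le_rpow_div (abs_nonneg t) hε
    _ = (|A| + 1 / ε) * |t| ^ ε := by ring

theorem of_norm_le_const {A : ℝ} (hf : ∀ t : ℝ, 1 ≤ |t| → ‖f t‖ ≤ A) :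
    SubpolynomialGrowth f :=
  of_norm_le_add_log fun t ht => (hf t ht).trans (le_add_of_nonneg_right (Real.log_nonneg ht))

theorem const (c : ℂ) : SubpolynomialGrowth fun _ => c :=
  of_norm_le_const fun _ _ => le_rfl

theorem add (hf : SubpolynomialGrowth f) (hg : SubpolynomialGrowth g) :
    SubpolynomialGrowth (f + g) := by
  intro ε hε
  obtain ⟨C, hC, hfC⟩ := hf ε hε
  obtain ⟨D, hD, hgD⟩ := hg ε hε
  refine ⟨C + D, by positivity, fun t ht => ?_⟩
  calc ‖f t + g t‖ ≤ ‖f t‖ + ‖g t‖ := norm_add_le _ _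
    _ ≤ C * |t| ^ ε + D * |t| ^ ε := add_le_add (hfC t ht) (hgD t ht)
    _ = (C + D) * |t| ^ ε := by ring

theorem mul (hf : SubpolynomialGrowth f) (hg : SubpolynomialGrowth g) :
    SubpolynomialGrowth (f * g) := by
  intro ε hε
  obtain ⟨C, hC, hfC⟩ := hf (ε / 2) (half_pos hε)
  obtain ⟨D, hD, hgD⟩ := hg (ε / 2) (half_pos hε)
  refine ⟨C * D, by positivity, fun t ht => ?_⟩
  have h_half : |t| ^ ε = |t| ^ (ε / 2) * |t| ^ (ε / 2) := by
    rw [← Real.rpow_add (by linarith), add_halves]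
  calc ‖f t * g t‖ = ‖f t‖ * ‖g t‖ := norm_mul _ _
    _ ≤ C * |t| ^ (ε / 2) * (D * |t| ^ (ε / 2)) :=
        mul_le_mul (hfC t ht) (hgD t ht) (norm_nonneg _) (by positivity)
    _ = C * D * |t| ^ ε := by rw [h_half]; ring

theorem const_mul (c : ℂ) (hf : SubpolynomialGrowth f) :
    SubpolynomialGrowth fun t => c * f t :=
  (const c).mul hf

theorem sum {ι : Type*} (s : Finset ι) {F : ι → ℝ → ℂ}
    (hF : ∀ i ∈ s, SubpolynomialGrowth (F i)) :
    SubpolynomialGrowth fun t => ∑ i ∈ s, F i t := by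
  rw [← Finset.sum_fn]
  exact Finset.sum_induction F SubpolynomialGrowth (fun _ _ => add) (const 0) hF

theorem prod {ι : Type*} (s : Finset ι) {F : ι → ℝ → ℂ}
    (hF : ∀ i ∈ s, SubpolynomialGrowth (F i)) :
    SubpolynomialGrowth fun t => ∏ i ∈ s, F i t := by
  rw [← Finset.prod_fn]
  exact Finset.prod_induction F SubpolynomialGrowth (fun _ _ => mul) (const 1) hF

theorem of_pow {n : ℕ} (hn : n ≠ 0) (hf : SubpolynomialGrowth fun t => f t ^ n) :
    SubpolynomialGrowth f := by
  intro ε hε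
  obtain ⟨C, hC, hfC⟩ := hf (ε * n) (by positivity)
  refine ⟨C ^ (n⁻¹ : ℝ), by positivity, fun t ht => ?_⟩
  refine (pow_le_pow_iff_left₀ (norm_nonneg _) (by positivity) hn).1 ?_
  calc ‖f t‖ ^ n = ‖f t ^ n‖ := (norm_pow _ _).symm
    _ ≤ C * |t| ^ (ε * n) := hfC t ht
    _ = (C ^ (n⁻¹ : ℝ) * |t| ^ ε) ^ n := by
        rw [mul_pow, Real.rpow_inv_natCast_pow hC.le hn, Real.rpow_mul_natCast (abs_nonneg t)]

end SubpolynomialGrowth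

theorem norm_sub_sub_smul_le_of_norm_deriv_sub_le {E : Type*} [NormedAddCommGroup E]
    [NormedSpace ℝ E] {f f' : ℝ → E} {a b C : ℝ} (hab : a ≤ b)
    (hf : ∀ x ∈ Set.Icc a b, HasDerivWithinAt f (f' x) (Set.Icc a b) x)
    (bound : ∀ x ∈ Set.Ico a b, ‖f' x - f' a‖ ≤ C) :
    ‖f b - f a - (b - a) • f' a‖ ≤ C * (b - a) := by
  have hg : ∀ x ∈ Set.Icc a b,
      HasDerivWithinAt (fun y => f y - (y - a) • f' a) (f' x - f' a) (Set.Icc a b) x := by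
    intro x hx
    convert (hf x hx).sub (((hasDerivAt_id x).sub_const a).smul_const (f' a)).hasDerivWithinAt
      using 1
    · rfl
    · rw [one_smul]
  simpa [sub_right_comm] using
    norm_image_sub_le_of_norm_deriv_le_segment' hg bound b (Set.right_mem_Icc.2 hab)

section CpowEstimates

variable {s : ℂ}

theorem norm_ofReal_cpow_neg_sub_le (hs : -1 ≤ s.re) {a : ℝ} (ha : 0 < a) {x : ℝ}
    (hx : x ∈ Set.Icc a (a + 1)) :
    ‖(x : ℂ) ^ (-s) - (a : ℂ) ^ (-s)‖ ≤ ‖s‖ * a ^ (-s.re - 1) * (x - a) := by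
  rcases eq_or_ne s 0 with rfl | hs0
  · simp
  refine norm_image_sub_le_of_norm_deriv_le_segment' (f := fun y : ℝ => (y : ℂ) ^ (-s))
    (fun y hy => (hasDerivAt_ofReal_cpow_const (ha.trans_le hy.1).ne'
      (neg_ne_zero.2 hs0)).hasDerivWithinAt) (fun y hy => ?_) x hx
  have hy0 : 0 < y := ha.trans_le hy.1
  rw [norm_mul, norm_neg, Complex.norm_cpow_eq_rpow_re_of_pos hy0]
  simp only [sub_re, neg_re, one_re]
  exact mul_le_mul_of_nonneg_left
    (Real.rpow_le_rpow_of_nonpos ha hy.1 (by linarith)) (norm_nonneg s)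

theorem norm_cpow_one_sub_div_sub_sub_cpow_neg_le (hs : -1 ≤ s.re) (hs1 : s ≠ 1) {a : ℝ}
    (ha : 0 < a) :
    ‖((a + 1 : ℝ) : ℂ) ^ (1 - s) / (1 - s) - (a : ℂ) ^ (1 - s) / (1 - s) - (a : ℂ) ^ (-s)‖
      ≤ ‖s‖ * a ^ (-s.re - 1) := by
  have hF : ∀ x ∈ Set.Icc a (a + 1), HasDerivWithinAt (fun y : ℝ => (y : ℂ) ^ (1 - s) / (1 - s))
      ((x : ℂ) ^ (-s)) (Set.Icc a (a + 1)) x := by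
    intro x hx
    have := hasDerivAt_ofReal_cpow_const' (ha.trans_le hx.1).ne' (r := -s)
      (by rwa [Ne, neg_inj])
    rw [neg_add_eq_sub] at this
    exact this.hasDerivWithinAt
  have := norm_sub_sub_smul_le_of_norm_deriv_sub_le (by linarith) hF fun x hx =>
    (norm_ofReal_cpow_neg_sub_le hs ha (Set.Ico_subset_Icc_self hx)).trans
      (mul_le_of_le_one_right (by positivity) (by linarith [hx.2]))
  simpa using this

theorem norm_sum_Ico_cpow_neg_sub_le (hs : 1 ≤ s.re) (hs1 : s ≠ 1) {N M : ℕ}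
    (hNM : N + 1 ≤ M) :
    ‖∑ n ∈ Ico (N + 1) M, (n : ℂ) ^ (-s)
        - ((M : ℂ) ^ (1 - s) / (1 - s) - ((N + 1 : ℕ) : ℂ) ^ (1 - s) / (1 - s))‖
      ≤ 2 * ‖s‖ / (N + 1) := by
  let F (n : ℕ) : ℂ := (n : ℂ) ^ (1 - s) / (1 - s)
  have hterm : ∀ n ∈ Ico (N + 1) M,
      ‖(n : ℂ) ^ (-s) - (F (n + 1) - F n)‖ ≤ ‖s‖ * ((n : ℝ) ^ 2)⁻¹ := by
    intro n hn
    have hn1 : (1 : ℝ) ≤ n := by exact_mod_cast (Nat.le_add_left 1 N).trans (mem_Ico.1 hn).1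
    have hpow : (n : ℝ) ^ (-s.re - 1) ≤ ((n : ℝ) ^ 2)⁻¹ := by
      rw [← Real.rpow_natCast, ← Real.rpow_neg (by positivity)]
      exact Real.rpow_le_rpow_of_exponent_le hn1 (by push_cast; linarith)
    have key := norm_cpow_one_sub_div_sub_sub_cpow_neg_le (by linarith) hs1
      (zero_lt_one.trans_le hn1)
    push_cast at key
    rw [norm_sub_rev]
    exact le_of_eq_of_le (by simp [F]) (key.trans (mul_le_mul_of_nonneg_left hpow (norm_nonneg s)))
  rw [← sum_Ico_sub F hNM, ← sum_sub_distrib]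
  calc ‖∑ n ∈ Ico (N + 1) M, ((n : ℂ) ^ (-s) - (F (n + 1) - F n))‖
      ≤ ∑ n ∈ Ico (N + 1) M, ‖s‖ * ((n : ℝ) ^ 2)⁻¹ := norm_sum_le_of_le _ hterm
    _ ≤ ‖s‖ * (2 / (N + 1)) := by
        rw [← mul_sum, Ico_add_one_left_eq_Ioo]
        exact mul_le_mul_of_nonneg_left (sum_Ioo_inv_sq_le N M) (norm_nonneg s)
    _ = 2 * ‖s‖ / (N + 1) := by ring

theorem norm_sum_range_cpow_neg_le_harmonic (hs : 1 ≤ s.re) (N : ℕ) :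
    ‖∑ n ∈ range (N + 1), (n : ℂ) ^ (-s)‖ ≤ harmonic N := by
  have hs0 : -s ≠ 0 := neg_ne_zero.2 fun h => by simp only [h, zero_re] at hs; linarith
  rw [sum_range_succ', Nat.cast_zero, zero_cpow hs0, add_zero]
  calc ‖∑ i ∈ range N, ((i + 1 : ℕ) : ℂ) ^ (-s)‖ ≤ ∑ i ∈ range N, ((i : ℝ) + 1)⁻¹ :=
        norm_sum_le_of_le _ fun i _ => ?_
    _ = harmonic N := by simp [harmonic]
  rw [norm_natCast_cpow_of_pos i.succ_pos, neg_re, ← Real.rpow_neg_one]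
  push_cast
  exact Real.rpow_le_rpow_of_exponent_le (by linarith [i.cast_nonneg (α := ℝ)]) (by linarith)

theorem norm_riemannZeta_le_of_one_lt_re (h1 : 1 < s.re) (h2 : s.re ≤ 2) (ht : 1 ≤ |s.im|) :
    ‖riemannZeta s‖ ≤ 9 + Real.log |s.im| := by
  set N := ⌊|s.im|⌋₊
  have hN1 : 1 ≤ N := Nat.le_floor (by simpa using ht)
  have hN : (N : ℝ) ≤ |s.im| := Nat.floor_le (abs_nonneg _)
  have hN' : |s.im| < N + 1 := Nat.lt_floor_add_one _
  have hs1 : s ≠ 1 := by rintro rfl; simp at h1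
  have hzeta : HasSum (fun n : ℕ => (n : ℂ) ^ (-s)) (riemannZeta s) := by
    simp_rw [cpow_neg, ← one_div]
    rw [zeta_eq_tsum_one_div_nat_cpow h1]
    exact (Complex.summable_one_div_nat_cpow.2 h1).hasSum
  have hF : ∀ m : ℕ, 1 ≤ m → ‖(m : ℂ) ^ (1 - s) / (1 - s)‖ ≤ 1 := by
    intro m hm
    rw [norm_div, norm_natCast_cpow_of_pos hm]
    refine div_le_one_of_le₀ ?_ (norm_nonneg _)
    calc (m : ℝ) ^ (1 - s).re ≤ 1 :=
          Real.rpow_le_one_of_one_le_of_nonpos (by exact_mod_cast hm) (by simp only [sub_re, one_re]; linarith)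
      _ ≤ |(1 - s).im| := by simpa using ht
      _ ≤ ‖1 - s‖ := abs_im_le_norm _
  have htail : 2 * ‖s‖ / (N + 1) ≤ 6 := by
    have : ‖s‖ ≤ 3 * |s.im| := (norm_le_abs_re_add_abs_im s).trans
      (by rw [abs_of_pos (by linarith : 0 < s.re)]; linarith)
    rw [div_le_iff₀ (by positivity)]
    linarith
  have hlog : Real.log N ≤ Real.log |s.im| := Real.log_le_log (by exact_mod_cast hN1) hN
  refine le_of_tendsto hzeta.tendsto_sum_nat.norm
    (Filter.eventually_atTop.2 ⟨N + 1, fun M hM => ?_⟩)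
  rw [← sum_range_add_sum_Ico _ hM]
  set G := (M : ℂ) ^ (1 - s) / (1 - s) - ((N + 1 : ℕ) : ℂ) ^ (1 - s) / (1 - s)
  calc ‖∑ n ∈ range (N + 1), (n : ℂ) ^ (-s) + ∑ n ∈ Ico (N + 1) M, (n : ℂ) ^ (-s)‖
      ≤ ‖∑ n ∈ range (N + 1), (n : ℂ) ^ (-s)‖
        + ‖∑ n ∈ Ico (N + 1) M, (n : ℂ) ^ (-s) - G‖ + ‖G‖ := by
        refine (norm_add_le _ _).trans ?_
        grw [add_assoc, ← norm_add_le, sub_add_cancel]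
    _ ≤ (1 + Real.log N) + 6 + 2 := by
        gcongr
        · exact (norm_sum_range_cpow_neg_le_harmonic h1.le N).trans (harmonic_le_one_add_log N)
        · exact (norm_sum_Ico_cpow_neg_sub_le h1.le hs1 hM).trans htail
        · exact (norm_sub_le _ _).trans (by linarith [hF M (by omega), hF (N + 1) (by omega)])
    _ ≤ 9 + Real.log |s.im| := by linarith

end CpowEstimates

theorem norm_riemannZeta_one_add_mul_I_le {t : ℝ} (ht : 1 ≤ |t|) :
    ‖riemannZeta (1 + t * I)‖ ≤ 9 + Real.log |t| := by
  have hne : 1 + t * I ≠ 1 := by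
    have : t ≠ 0 := by rintro rfl; norm_num at ht
    simpa [Complex.ext_iff] using this
  have hcont : ContinuousAt (fun σ : ℝ => riemannZeta (σ + t * I)) 1 :=
    (differentiableAt_riemannZeta hne).continuousAt.comp_of_eq (by fun_prop) (by simp)
  have hlim := (hcont.tendsto.mono_left (nhdsWithin_le_nhds (s := Set.Ioi 1))).norm
  rw [ofReal_one] at hlim
  refine le_of_tendsto hlim ?_
  filter_upwards [Ioo_mem_nhdsGT one_lt_two] with σ hσ
  simpa using norm_riemannZeta_le_of_one_lt_re (s := σ + t * I) (by simpa using hσ.1)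
    (by simpa using hσ.2.le) (by simpa using ht)

theorem norm_riemannZeta_le_tsum {s : ℂ} {a : ℝ} (ha : 1 < a) (hs : a ≤ s.re) :
    ‖riemannZeta s‖ ≤ ∑' n : ℕ, 1 / (n : ℝ) ^ a := by
  have hsum : Summable fun n : ℕ => 1 / (n : ℝ) ^ a := Real.summable_one_div_nat_rpow.2 ha
  rw [zeta_eq_tsum_one_div_nat_cpow (ha.trans_le hs)]
  refine tsum_of_norm_bounded hsum.hasSum fun n => ?_
  rcases n.eq_zero_or_pos with rfl | hn
  · have hs0 : s ≠ 0 := by rintro rfl; simp only [zero_re] at hs; linarith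
    simp [hs0, Real.zero_rpow (by linarith : a ≠ 0)]
  rw [norm_div, norm_one, norm_natCast_cpow_of_pos hn]
  gcongr
  exact Nat.one_le_cast.2 hn

theorem subpolynomialGrowth_riemannZeta_nat_mul {k : ℕ} (hk : 2 ≤ k) :
    SubpolynomialGrowth fun t : ℝ => riemannZeta (k * (1 / 2 + t * I)) := by
  obtain rfl | hk3 := hk.eq_or_lt
  · refine SubpolynomialGrowth.of_norm_le_add_log (A := 9 + Real.log 2) fun t ht => ?_
    have h2t : 1 ≤ |2 * t| := by rw [abs_mul, abs_two]; linarith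
    have h := norm_riemannZeta_one_add_mul_I_le h2t
    rw [abs_mul, abs_two, Real.log_mul two_ne_zero (by positivity)] at h
    calc ‖riemannZeta ((2 : ℕ) * (1 / 2 + t * I))‖ = ‖riemannZeta (1 + (2 * t : ℝ) * I)‖ := by
          push_cast; ring_nf
      _ ≤ 9 + Real.log 2 + Real.log |t| := by linarith
  · refine SubpolynomialGrowth.of_norm_le_const fun t _ =>
      norm_riemannZeta_le_tsum (a := 3 / 2) (by norm_num) ?_
    have hre : ((k : ℂ) * (1 / 2 + t * I)).re = k / 2 := by simp [div_eq_mul_inv]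
    have : (3 : ℝ) ≤ k := by exact_mod_cast hk3
    rw [hre]
    linarith

theorem Finpartition.univ_fin_two :
    (univ : Finset (Finpartition (univ : Finset (Fin 2)))) = {⊤, ⊥} := by
  have parts_cases : ∀ q : Finset (Finset (Fin 2)), q.sup id = univ → ⊥ ∉ q → q.SupIndep id →
      q = {univ} ∨ q = {{0}, {1}} := by decide
  ext P
  simp only [mem_univ, mem_insert, mem_singleton, true_iff]
  refine (parts_cases _ P.sup_parts P.bot_notMem P.supIndep).imp ?_ ?_ <;>
    exact fun h => Finpartition.ext (h.trans (by rfl))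

theorem ezDiagonal_two (s : ℂ) :
    ezDiagonal 2 s = (riemannZeta s ^ 2 - riemannZeta (2 * s)) / 2 := by
  have parts_top : (⊤ : Finpartition (univ : Finset (Fin 2))).parts = {univ} := rfl
  rw [ezDiagonal, Finpartition.univ_fin_two, sum_pair (by decide)]
  simp only [Nat.factorial_two, Nat.cast_ofNat, one_div, parts_top, card_singleton,
    Nat.add_one_sub_one, pow_one, prod_singleton, card_univ, Fintype.card_fin, Nat.factorial_one,
    Nat.cast_one, mul_one, neg_mul, one_mul, Finpartition.parts_bot, card_map, tsub_self, pow_zero,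
    prod_map, Function.Embedding.coeFn_mk, Nat.factorial_zero, prod_const_one, prod_const]
  ring

theorem subpolynomialGrowth_ezDiagonal
    (h : SubpolynomialGrowth fun t : ℝ => riemannZeta (1 / 2 + t * I)) (r : ℕ) :
    SubpolynomialGrowth fun t : ℝ => ezDiagonal r (1 / 2 + t * I) := by
  have hzeta : ∀ k : ℕ, 1 ≤ k →
      SubpolynomialGrowth fun t : ℝ => riemannZeta (k * (1 / 2 + t * I)) := by
    intro k hk
    obtain rfl | hk2 := hk.eq_or_lt
    · simpa using h
    · exact subpolynomialGrowth_riemannZeta_nat_mul hk2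
  exact .const_mul _ <| .sum _ fun P _ => .const_mul _ <| .prod _ fun B hB =>
    hzeta _ (card_pos.2 (P.nonempty_of_mem_parts hB))

theorem subpolynomialGrowth_riemannZeta_of_ezDiagonal_two
    (h : SubpolynomialGrowth fun t : ℝ => ezDiagonal 2 (1 / 2 + t * I)) :
    SubpolynomialGrowth fun t : ℝ => riemannZeta (1 / 2 + t * I) := by
  have hsq (s : ℂ) : riemannZeta s ^ 2 = 2 * ezDiagonal 2 s + riemannZeta ((2 : ℕ) * s) := by
    rw [ezDiagonal_two]
    push_cast
    ring
  refine .of_pow two_ne_zero ?_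
  simp_rw [hsq]
  exact (h.const_mul 2).add (subpolynomialGrowth_riemannZeta_nat_mul le_rfl)

/-- Proposition 3.9: the Lindelöf hypothesis for the Riemann zeta function is equivalent
to the Lindelöf hypothesis `Z_r(1/2 + it) = O(|t|^ε)` for the diagonal Euler–Zagier
multiple zeta-functions `Z_r(s) = ζ_r(s,…,s)` for all `r ≥ 2`. -/
theorem lindelof_iff_lindelof_euler_zagier_diagonal :
    (∀ ε : ℝ, 0 < ε → ∃ C : ℝ, 0 < C ∧ ∀ t : ℝ, 1 ≤ |t| →
        ‖riemannZeta (1 / 2 + t * Complex.I)‖ ≤ C * |t| ^ ε) ↔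
    (∀ r : ℕ, 2 ≤ r → ∀ ε : ℝ, 0 < ε → ∃ C : ℝ, 0 < C ∧ ∀ t : ℝ, 1 ≤ |t| →
        ‖ezDiagonal r (1 / 2 + t * Complex.I)‖ ≤ C * |t| ^ ε) :=
  ⟨fun h r _ => subpolynomialGrowth_ezDiagonal h r,
    fun h => subpolynomialGrowth_riemannZeta_of_ezDiagonal_two (h 2 le_rfl)⟩
end

section
/- Let r ≥ 2 and let s₁, …, s_r ∈ ℂ with Re s_j > 1 for every j. Then Σ_{σ ∈ S_r} ζ_r(s_{σ(1)}, …, s_{σ(r)}) = Σ_Π (−1)^{r−|Π|} ( ∏_{B ∈ Π} (|B| − 1)! ) · ∏_{B ∈ Π} ζ( Σ_{k ∈ B} s_k ), where S_r is the symmetric group on {1, …, r}, the right-hand sum runs over all set partitions Π of {1, …, r}, |Π| is the number of blocks of Π, |B| the cardinality of a block B, and ζ is the Riemann zeta function. -/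
open Complex Finset

/-- The Euler–Zagier multiple zeta-function
`ζ_r(s₁,…,s_r) = ∑_{n₁ > n₂ > ⋯ > n_r ≥ 1} n₁^{−s₁} ⋯ n_r^{−s_r}`,
as a sum over strictly decreasing tuples of positive integers. -/
noncomputable def eulerZagierZeta (r : ℕ) (s : Fin r → ℂ) : ℂ :=
  ∑' n : {n : Fin r → ℕ // StrictAnti n ∧ ∀ i, 1 ≤ n i},
    ∏ i, ((n.1 i : ℂ)) ^ (-(s i))

/-!
Both sides equal the absolutely convergent series `∑ m₁^{-s₁} ⋯ m_r^{-s_r}` over the injective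
`m : Fin r → ℕ`. On the left, each injective `m` is sorted into a strictly decreasing tuple by
exactly one permutation. On the right, expanding `∏_B ζ(∑_{k ∈ B} s_k)` gives the same series
restricted to the `m` that are constant on the blocks of `Π`, and the coefficient
`(−1)^{r−|Π|} ∏_B (|B|−1)!` is the Möbius function `μ(0̂, Π)` of the lattice of set partitions.
So for a fixed `m` the coefficients add up to `∑_{Π ≤ ker m} μ(0̂, Π)`, which is `1` if `m` is
injective (`ker m = 0̂`) and `0` otherwise; this is proved by induction, splitting off the block
that contains a given point.
-/

section PiProduct

variable {κ R : Type*} [NormedCommRing R]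

theorem summable_norm_prod_fin : ∀ {n : ℕ} {f : Fin n → κ → R},
    (∀ i, Summable fun k => ‖f i k‖) → Summable fun m : Fin n → κ => ‖∏ i, f i (m i)‖
  | 0, _, _ => Summable.of_finite
  | _ + 1, f, hf => by
    rw [← (Fin.consEquiv _).summable_iff]
    convert (hf 0).mul_norm (summable_norm_prod_fin fun i => hf i.succ) using 2 with p
    simp [Fin.prod_univ_succ]

theorem tsum_prod_fin [CompleteSpace R] : ∀ {n : ℕ} {f : Fin n → κ → R},
    (∀ i, Summable fun k => ‖f i k‖) → ∑' m : Fin n → κ, ∏ i, f i (m i) = ∏ i, ∑' k, f i k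
  | 0, _, _ => by simp
  | _ + 1, f, hf => by
    rw [← (Fin.consEquiv _).tsum_eq, Fin.prod_univ_succ, ← tsum_prod_fin fun i => hf i.succ,
      tsum_mul_tsum_of_summable_norm (hf 0) (summable_norm_prod_fin fun i => hf i.succ)]
    simp [Fin.prod_univ_succ]

variable {ι : Type*} [Fintype ι] {f : ι → κ → R}

theorem summable_norm_prod_pi (hf : ∀ i, Summable fun k => ‖f i k‖) :
    Summable fun m : ι → κ => ‖∏ i, f i (m i)‖ := by
  let e := Fintype.equivFin ι
  rw [← (e.arrowCongr (Equiv.refl κ)).symm.summable_iff]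
  refine (summable_norm_prod_fin (f := fun j => f (e.symm j)) fun j => hf _).congr fun m => ?_
  rw [Function.comp_apply, Fintype.prod_equiv e _ (fun j => f (e.symm j) (m j))
    fun i => by simp [Equiv.arrowCongr_apply]]

theorem tsum_prod_pi [CompleteSpace R] (hf : ∀ i, Summable fun k => ‖f i k‖) :
    ∑' m : ι → κ, ∏ i, f i (m i) = ∏ i, ∑' k, f i k := by
  let e := Fintype.equivFin ι
  rw [← (e.arrowCongr (Equiv.refl κ)).symm.tsum_eq]
  convert tsum_prod_fin (f := fun j => f (e.symm j)) fun j => hf _ using 1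
  · congr 1 with m
    exact Fintype.prod_equiv e _ _ fun i => by simp [Equiv.arrowCongr_apply]
  · exact Fintype.prod_equiv e _ _ (by simp)

end PiProduct

theorem summable_norm_natCast_cpow_neg {t : ℂ} (ht : 1 < t.re) :
    Summable fun n : ℕ => ‖(n : ℂ) ^ (-t)‖ := by
  rw [summable_norm_iff]
  simpa [cpow_neg] using summable_one_div_nat_cpow.2 ht

theorem tsum_natCast_cpow_neg {t : ℂ} (ht : 1 < t.re) :
    ∑' n : ℕ, (n : ℂ) ^ (-t) = riemannZeta t := by
  simp [zeta_eq_tsum_one_div_nat_cpow ht, cpow_neg]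

theorem natCast_cpow_neg_sum {ι : Type*} {B : Finset ι} (hB : B.Nonempty) {s : ι → ℂ}
    (hs : ∀ i ∈ B, 0 < (s i).re) (n : ℕ) :
    (n : ℂ) ^ (-∑ i ∈ B, s i) = ∏ i ∈ B, (n : ℂ) ^ (-s i) := by
  rcases eq_or_ne n 0 with rfl | hn
  · obtain ⟨a, ha⟩ := hB
    have hsum : 0 < (∑ i ∈ B, s i).re := by
      rw [re_sum]
      exact sum_pos hs ⟨a, ha⟩
    rw [Nat.cast_zero, zero_cpow (neg_ne_zero.2 fun h => by simp [h] at hsum),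
      prod_eq_zero ha (zero_cpow (neg_ne_zero.2 fun h => by simpa [h] using hs a ha))]
  · simp only [cpow_def_of_ne_zero (Nat.cast_ne_zero.2 hn), ← exp_sum, ← mul_sum, sum_neg_distrib]

section EulerZagierTerm

variable {ι : Type*} [Fintype ι]

/-- Since `0 ^ (-s) = 0` for `s ≠ 0`, this vanishes as soon as some `m i = 0`, so sums of it
may run over all of `ι → ℕ`. -/
noncomputable def eulerZagierTerm (s : ι → ℂ) (m : ι → ℕ) : ℂ :=
  ∏ i, (m i : ℂ) ^ (-s i)

theorem eulerZagierTerm_eq_zero {s : ι → ℂ} {m : ι → ℕ} {i : ι} (hs : s i ≠ 0) (hm : m i = 0) :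
    eulerZagierTerm s m = 0 :=
  prod_eq_zero (mem_univ i) (by rw [hm, Nat.cast_zero, zero_cpow (neg_ne_zero.2 hs)])

theorem eulerZagierTerm_comp_perm (s : ι → ℂ) (m : ι → ℕ) (σ : Equiv.Perm ι) :
    eulerZagierTerm (s ∘ σ) (m ∘ σ) = eulerZagierTerm s m :=
  Equiv.prod_comp σ fun i => (m i : ℂ) ^ (-s i)

theorem summable_eulerZagierTerm {s : ι → ℂ} (hs : ∀ i, 1 < (s i).re) :
    Summable (eulerZagierTerm s) :=
  (summable_norm_prod_pi fun i => summable_norm_natCast_cpow_neg (hs i)).of_norm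

end EulerZagierTerm

section Sorting

variable {α : Type*} [LinearOrder α] {n : ℕ}

theorem perm_eq_of_strictAnti_comp {m : Fin n → α} (hm : Function.Injective m)
    {σ τ : Equiv.Perm (Fin n)} (hσ : StrictAnti (m ∘ σ)) (hτ : StrictAnti (m ∘ τ)) : σ = τ := by
  have h := Tuple.unique_monotone (σ := Fin.revPerm.trans σ) (τ := Fin.revPerm.trans τ)
    (hσ.comp Fin.rev_strictAnti).monotone (hτ.comp Fin.rev_strictAnti).monotone
  ext i
  simpa using congrArg Fin.val (hm (congrFun h (Fin.rev i)))

theorem existsUnique_strictAnti_comp_perm {m : Fin n → α} (hm : Function.Injective m) :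
    ∃! σ : Equiv.Perm (Fin n), StrictAnti (m ∘ σ) := by
  have hsort : StrictAnti (m ∘ Tuple.sort m ∘ Fin.rev) :=
    ((Tuple.monotone_sort m).strictMono_of_injective
      (hm.comp (Tuple.sort m).injective)).comp_strictAnti Fin.rev_strictAnti
  exact ⟨Fin.revPerm.trans (Tuple.sort m), hsort,
    fun τ hτ => perm_eq_of_strictAnti_comp hm hτ hsort⟩

theorem sum_perm_indicator_strictAnti_comp {M : Type*} [AddCommMonoid M] (g : (Fin n → α) → M)
    (m : Fin n → α) :
    ∑ σ : Equiv.Perm (Fin n), {m | StrictAnti (m ∘ σ)}.indicator g m =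
      {m | Function.Injective m}.indicator g m := by
  by_cases hm : Function.Injective m
  · obtain ⟨σ, hσ, huniq⟩ := existsUnique_strictAnti_comp_perm hm
    rw [Fintype.sum_eq_single σ fun τ hτ => Set.indicator_of_notMem (fun h => hτ (huniq τ h)) g,
      Set.indicator_of_mem hσ, Set.indicator_of_mem hm]
  · rw [Set.indicator_of_notMem hm]
    refine sum_eq_zero fun σ _ => Set.indicator_of_notMem (fun h => hm ?_) g
    simpa using h.injective.comp σ.symm.injective

end Sorting

theorem eulerZagierZeta_eq_tsum_indicator {r : ℕ} {s : Fin r → ℂ} (hs : ∀ i, s i ≠ 0) :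
    eulerZagierZeta r s =
      ∑' m, {m : Fin r → ℕ | StrictAnti m}.indicator (eulerZagierTerm s) m := by
  refine (_root_.tsum_subtype {m : Fin r → ℕ | StrictAnti m ∧ ∀ i, 1 ≤ m i}
    (eulerZagierTerm s)).trans (tsum_congr fun m => ?_)
  by_cases hm : ∀ i, 1 ≤ m i
  · simp [Set.indicator_apply, hm]
  · obtain ⟨i, hi⟩ := not_forall.1 hm
    have h₀ : eulerZagierTerm s m = 0 := eulerZagierTerm_eq_zero (hs i) (by omega)
    simp [Set.indicator_apply, h₀]

theorem eulerZagierZeta_comp_perm {r : ℕ} {s : Fin r → ℂ} (hs : ∀ i, s i ≠ 0)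
    (σ : Equiv.Perm (Fin r)) :
    eulerZagierZeta r (fun i => s (σ i)) =
      ∑' m, {m : Fin r → ℕ | StrictAnti (m ∘ σ)}.indicator (eulerZagierTerm s) m := by
  rw [eulerZagierZeta_eq_tsum_indicator fun i => hs (σ i),
    ← (σ.symm.arrowCongr (Equiv.refl ℕ)).tsum_eq]
  refine tsum_congr fun m => ?_
  simp only [Set.indicator_apply]
  exact if_congr Iff.rfl (eulerZagierTerm_comp_perm s m σ) rfl

theorem sum_perm_eulerZagierZeta {r : ℕ} {s : Fin r → ℂ} (hs : ∀ i, 1 < (s i).re) :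
    ∑ σ : Equiv.Perm (Fin r), eulerZagierZeta r (fun i => s (σ i)) =
      ∑' m, {m : Fin r → ℕ | Function.Injective m}.indicator (eulerZagierTerm s) m := by
  have hs₀ : ∀ i, s i ≠ 0 := fun i => ne_zero_of_one_lt_re (hs i)
  simp_rw [eulerZagierZeta_comp_perm hs₀, ← Summable.tsum_finsetSum fun σ _ =>
    (summable_eulerZagierTerm hs).indicator _, sum_perm_indicator_strictAnti_comp]

namespace Finpartition

section Recursion

variable {α : Type*} [DecidableEq α]

theorem parts_avoid_of_mem {s C : Finset α} (P : Finpartition s) (hC : C ∈ P.parts) :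
    (P.avoid C).parts = P.parts.erase C := by
  ext B
  rw [mem_avoid, mem_erase]
  constructor
  · rintro ⟨D, hD, hDC, rfl⟩
    have hdisj : Disjoint D C := P.disjoint hD hC fun h => hDC (h ▸ le_rfl)
    rw [hdisj.sdiff_eq_left]
    exact ⟨fun h => hDC (h ▸ le_rfl), hD⟩
  · rintro ⟨hBC, hB⟩
    have hdisj : Disjoint B C := P.disjoint hB hC hBC
    exact ⟨B, hB, fun hle => P.ne_bot hB (hdisj.eq_bot_of_le hle), hdisj.sdiff_eq_left⟩

theorem sum_prod_eq_sum_filter_mem {M : Type*} [CommSemiring M] (φ : Finset α → M)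
    {s : Finset α} {x : α} (hx : x ∈ s) :
    ∑ P : Finpartition s, ∏ B ∈ P.parts, φ B =
      ∑ C ∈ s.powerset with x ∈ C, φ C * ∑ Q : Finpartition (s \ C), ∏ B ∈ Q.parts, φ B := by
  have hmaps : ∀ P ∈ (univ : Finset (Finpartition s)), P.part x ∈ s.powerset.filter (x ∈ ·) :=
    fun P _ => mem_filter.2 ⟨mem_powerset.2 (P.part_subset x), P.mem_part_self.2 hx⟩
  rw [← sum_fiberwise_of_maps_to hmaps]
  refine sum_congr rfl fun C hC => ?_
  obtain ⟨hCs, hxC⟩ := mem_filter.1 hC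
  have hCne : C ≠ ⊥ := ne_empty_of_mem hxC
  have hsup : (s \ C) ⊔ C = s := sdiff_union_of_subset (mem_powerset.1 hCs)
  have hmem : ∀ P : Finpartition s, P.part x = C → C ∈ P.parts := fun P h =>
    h ▸ P.part_mem.2 hx
  rw [mul_sum]
  refine sum_nbij' (fun P => P.avoid C) (fun Q => Q.extend hCne sdiff_disjoint hsup)
    (fun _ _ => mem_univ _) (fun Q _ => ?_) (fun P hP => ?_) (fun Q _ => ?_) (fun P hP => ?_)
  · exact mem_filter.2 ⟨mem_univ _, part_eq_of_mem _ (mem_insert_self _ _) hxC⟩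
  · rw [mem_filter] at hP
    ext1
    rw [extend_parts, parts_avoid_of_mem _ (hmem P hP.2), insert_erase (hmem P hP.2)]
  · have hCQ : C ∉ Q.parts := fun h => (mem_sdiff.1 (Q.le h hxC)).2 hxC
    ext1
    rw [parts_avoid_of_mem _ (by simp [extend_parts]), extend_parts, erase_insert hCQ]
  · rw [mem_filter] at hP
    rw [parts_avoid_of_mem _ (hmem P hP.2), ← prod_insert (notMem_erase C _),
      insert_erase (hmem P hP.2)]

end Recursion

section LiftParts

variable {ι κ : Type*} [Fintype ι] [DecidableEq ι] (P : Finpartition (univ : Finset ι))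

def liftParts (v : P.parts → κ) (i : ι) : κ :=
  v ⟨P.part i, P.part_mem.2 (mem_univ i)⟩

theorem liftParts_apply_of_mem (v : P.parts → κ) {B : P.parts} {i : ι} (hi : i ∈ B.1) :
    P.liftParts v i = v B :=
  congrArg v (Subtype.ext (P.part_eq_of_mem B.2 hi))

theorem liftParts_injective : Function.Injective (P.liftParts (κ := κ)) := by
  intro v w h
  funext B
  obtain ⟨i, hi⟩ := P.nonempty_of_mem_parts B.2
  rw [← P.liftParts_apply_of_mem v hi, ← P.liftParts_apply_of_mem w hi, h]

theorem range_liftParts :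
    Set.range (P.liftParts (κ := κ)) = {m | ∀ B ∈ P.parts, ∀ i ∈ B, ∀ j ∈ B, m i = m j} := by
  ext m
  constructor
  · rintro ⟨v, rfl⟩ B hB i hi j hj
    rw [P.liftParts_apply_of_mem (B := ⟨B, hB⟩) v hi, P.liftParts_apply_of_mem (B := ⟨B, hB⟩) v hj]
  · intro hm
    refine ⟨fun B => m (P.nonempty_of_mem_parts B.2).choose, funext fun i => ?_⟩
    have hB := P.part_mem.2 (mem_univ i)
    exact hm _ hB _ (P.nonempty_of_mem_parts hB).choose_spec i (P.mem_part_self.2 (mem_univ i))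

theorem prod_liftParts {M : Type*} [CommMonoid M] (g : ι → κ → M) (v : P.parts → κ) :
    ∏ i, g i (P.liftParts v i) = ∏ B : P.parts, ∏ i ∈ B.1, g i (v B) := by
  calc ∏ i, g i (P.liftParts v i)
      = ∏ i ∈ P.parts.biUnion id, g i (P.liftParts v i) := by rw [P.biUnion_parts]
    _ = ∏ B ∈ P.parts.attach, ∏ i ∈ B.1, g i (P.liftParts v i) := by
      rw [prod_biUnion P.supIndep.pairwiseDisjoint, ← prod_attach P.parts]
      rfl
    _ = ∏ B : P.parts, ∏ i ∈ B.1, g i (v B) :=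
      prod_congr rfl fun B _ => prod_congr rfl fun i hi => by rw [P.liftParts_apply_of_mem v hi]

end LiftParts

end Finpartition

section Mobius

/-- `μ(0̂, 1̂) = (-1)^(n-1) (n-1)!` in the lattice of set partitions of an `n`-element set. -/
def partitionMobius (n : ℕ) : ℤ := (-1) ^ (n - 1) * (n - 1).factorial

theorem partitionMobius_succ_add_nsmul (n : ℕ) :
    partitionMobius (n + 1) + n • partitionMobius n = if n = 0 then 1 else 0 := by
  rcases n with _ | n
  · simp [partitionMobius]
  · rw [if_neg n.succ_ne_zero]
    simp only [partitionMobius, Nat.add_sub_cancel, nsmul_eq_mul, Nat.factorial_succ]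
    push_cast
    ring

variable {α β : Type*} [DecidableEq α]

theorem prod_partitionMobius_card {s : Finset α} (P : Finpartition s) :
    ∏ B ∈ P.parts, partitionMobius #B =
      (-1) ^ (#s - #P.parts) * ∏ B ∈ P.parts, ((#B - 1).factorial : ℤ) := by
  have hsum : ∑ B ∈ P.parts, (#B - 1) = #s - #P.parts := by
    rw [sum_tsub_distrib _ fun B hB => card_pos.2 (P.nonempty_of_mem_parts hB), P.sum_card_parts,
      sum_const, smul_eq_mul, mul_one]
  rw [← hsum, ← prod_pow_eq_pow_sum, ← prod_mul_distrib]
  rfl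

theorem sum_powerset_ite_card_le_one {M : Type*} [AddCommMonoid M] (E : Finset α) (h : ℕ → M) :
    ∑ D ∈ E.powerset, (if #D ≤ 1 then h #D else 0) = h 0 + #E • h 1 := by
  induction E using Finset.induction_on with
  | empty => simp
  | insert a E ha ih =>
    rw [sum_powerset_insert ha, ih, card_insert_of_notMem ha, succ_nsmul, add_assoc]
    congr 2
    rw [sum_eq_single_of_mem ∅ (empty_mem_powerset E) fun D hD hne => ?_]
    · simp
    · have haD : a ∉ D := fun h => ha (mem_powerset.1 hD h)
      simp [card_insert_of_notMem haD, hne]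

theorem sum_filter_mem_powerset_eq_sum_sdiff {M : Type*} [AddCommMonoid M] {F : Finset α} {x : α}
    (hx : x ∈ F) (g : Finset α → M) :
    ∑ C ∈ F.powerset with x ∈ C, g C = ∑ D ∈ (F.erase x).powerset, g (F \ D) := by
  refine sum_nbij' (F \ ·) (F \ ·) (fun C hC => ?_) (fun D hD => ?_) (fun C hC => ?_)
    (fun D hD => ?_) (fun C hC => ?_)
  all_goals simp only [mem_filter, mem_powerset] at *
  · grind
  · grind
  · exact Finset.sdiff_sdiff_eq_self hC.1
  · exact Finset.sdiff_sdiff_eq_self (hD.trans (erase_subset x F))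
  · rw [Finset.sdiff_sdiff_eq_self hC.1]

variable [DecidableEq β]

theorem injOn_sdiff_iff {m : α → β} {b : β} {s C : Finset α} (hC : C ⊆ {i ∈ s | m i = b}) :
    Set.InjOn m ↑(s \ C) ↔
      Set.InjOn m ↑(s \ {i ∈ s | m i = b}) ∧ #({i ∈ s | m i = b} \ C) ≤ 1 := by
  set F := {i ∈ s | m i = b}
  have hmF : ∀ i ∈ F, m i = b := fun i hi => (mem_filter.1 hi).2
  have hsplit : (↑(s \ C) : Set α) = ↑(s \ F) ∪ ↑(F \ C) := by
    rw [← coe_union, sdiff_union_sdiff_cancel (filter_subset _ s) hC]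
  have hconst : Set.InjOn m ↑(F \ C) ↔ #(F \ C) ≤ 1 := by
    rw [card_le_one]
    refine ⟨fun h i hi j hj => h hi hj ?_, fun h i hi j hj _ => h i hi j hj⟩
    rw [hmF i (mem_sdiff.1 hi).1, hmF j (mem_sdiff.1 hj).1]
  have hcross : ∀ i ∈ (↑(s \ F) : Set α), ∀ j ∈ (↑(F \ C) : Set α), m i ≠ m j := by
    intro i hi j hj hij
    rw [mem_coe, mem_sdiff] at hi hj
    exact hi.2 (mem_filter.2 ⟨hi.1, hij.trans (hmF j hj.1)⟩)
  rw [hsplit, Set.injOn_union (disjoint_coe.2 (sdiff_disjoint.mono_right sdiff_subset)), hconst]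
  exact ⟨fun h => ⟨h.1, h.2.1⟩, fun h => ⟨h.1, h.2, hcross⟩⟩

/-- With `F` the fibre of `m` through `x`, the set `s \ C` stays injective iff `s \ F` is and
`F \ C` has at most one point; so the sum is `[InjOn m (s \ F)] (μ(|F|) + (|F| - 1) μ(|F| - 1))`. -/
theorem sum_fibre_partitionMobius_mul_injOn (m : α → β) {s : Finset α} {x : α} (hx : x ∈ s) :
    ∑ C ∈ {i ∈ s | m i = m x}.powerset with x ∈ C,
        partitionMobius #C * (if Set.InjOn m ↑(s \ C) then 1 else 0) =
      if Set.InjOn m ↑s then 1 else 0 := by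
  set F := {i ∈ s | m i = m x}
  have hxF : x ∈ F := mem_filter.2 ⟨hx, rfl⟩
  have hcard : #F = #(F.erase x) + 1 := (card_erase_add_one hxF).symm
  have hinj : Set.InjOn m ↑s ↔ Set.InjOn m ↑(s \ F) ∧ #(F.erase x) = 0 := by
    have h : Set.InjOn m ↑(s \ ∅) ↔ Set.InjOn m ↑(s \ F) ∧ #(F \ ∅) ≤ 1 :=
      injOn_sdiff_iff (empty_subset F)
    rw [sdiff_empty, sdiff_empty, hcard] at h
    exact h.trans (and_congr_right fun _ => by omega)
  calc ∑ C ∈ F.powerset with x ∈ C, partitionMobius #C * (if Set.InjOn m ↑(s \ C) then 1 else 0)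
      = ∑ D ∈ (F.erase x).powerset, (if Set.InjOn m ↑(s \ F) then 1 else 0) *
          (if #D ≤ 1 then partitionMobius (#F - #D) else 0) := by
        rw [sum_filter_mem_powerset_eq_sum_sdiff hxF]
        refine sum_congr rfl fun D hD => ?_
        have hDF : D ⊆ F := (mem_powerset.1 hD).trans (erase_subset x F)
        have hinjD : Set.InjOn m ↑(s \ (F \ D)) ↔ Set.InjOn m ↑(s \ F) ∧ #D ≤ 1 := by
          rw [injOn_sdiff_iff sdiff_subset, Finset.sdiff_sdiff_eq_self hDF]
        rw [card_sdiff_of_subset hDF]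
        simp only [hinjD]
        by_cases h₁ : Set.InjOn m ↑(s \ F) <;> by_cases h₂ : #D ≤ 1 <;> simp only [h₁, h₂] <;> simp
    _ = if Set.InjOn m ↑s then 1 else 0 := by
        rw [← mul_sum, sum_powerset_ite_card_le_one (F.erase x) fun k => partitionMobius (#F - k),
          hcard, Nat.sub_zero, Nat.add_sub_cancel, partitionMobius_succ_add_nsmul]
        simp only [hinj]
        by_cases h₁ : Set.InjOn m ↑(s \ F) <;> by_cases h₂ : #(F.erase x) = 0 <;>
          simp only [h₁, h₂] <;> simp

def blockWeight (m : α → β) (B : Finset α) : ℤ :=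
  if ∀ i ∈ B, ∀ j ∈ B, m i = m j then partitionMobius #B else 0

theorem sum_blockWeight_mul_injOn (m : α → β) {s : Finset α} {x : α} (hx : x ∈ s) :
    ∑ C ∈ s.powerset with x ∈ C, blockWeight m C * (if Set.InjOn m ↑(s \ C) then 1 else 0) =
      if Set.InjOn m ↑s then 1 else 0 := by
  rw [← sum_fibre_partitionMobius_mul_injOn m hx]
  refine (sum_subset (fun C hC => ?_) fun C hC hCF => ?_).symm.trans
    (sum_congr rfl fun C hC => ?_)
  · simp only [mem_filter, mem_powerset] at hC ⊢
    exact ⟨hC.1.trans (filter_subset _ s), hC.2⟩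
  · simp only [mem_filter, mem_powerset] at hC hCF
    refine mul_eq_zero_of_left (if_neg fun hconst => hCF ⟨fun i hi => ?_, hC.2⟩) _
    exact mem_filter.2 ⟨hC.1 hi, hconst i hi x hC.2⟩
  · have hCF := mem_powerset.1 (mem_filter.1 hC).1
    rw [blockWeight, if_pos fun i hi j hj =>
      ((mem_filter.1 (hCF hi)).2).trans (mem_filter.1 (hCF hj)).2.symm]

/-- Möbius inversion in the lattice of set partitions: `∑_{Π ≤ ker m} μ(0̂, Π) = [ker m = 0̂]`. -/
theorem sum_finpartition_prod_blockWeight (m : α → β) (s : Finset α) :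
    ∑ P : Finpartition s, ∏ B ∈ P.parts, blockWeight m B = if Set.InjOn m ↑s then 1 else 0 := by
  induction s using Finset.strongInduction with
  | H s ih =>
  rcases s.eq_empty_or_nonempty with rfl | ⟨x, hx⟩
  · have hparts : ∀ P : Finpartition (∅ : Finset α), P.parts = ∅ := fun P =>
      P.parts_eq_empty_iff.2 rfl
    simp only [hparts, prod_empty, sum_const, card_univ, nsmul_one, coe_empty, Set.injOn_empty,
      if_true, Nat.cast_eq_one]
    exact Fintype.card_eq_one_iff.2
      ⟨Finpartition.empty _, fun P => Finpartition.ext (by rw [hparts, hparts])⟩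
  · rw [Finpartition.sum_prod_eq_sum_filter_mem _ hx, ← sum_blockWeight_mul_injOn m hx]
    refine sum_congr rfl fun C hC => ?_
    obtain ⟨hCs, hxC⟩ := mem_filter.1 hC
    rw [ih _ (sdiff_ssubset (mem_powerset.1 hCs) ⟨x, hxC⟩)]

theorem sum_finpartition_mul_indicator {ι R : Type*} [Fintype ι] [DecidableEq ι] [CommRing R]
    (g : (ι → β) → R) (m : ι → β) :
    ∑ P : Finpartition (univ : Finset ι), (∏ B ∈ P.parts, (partitionMobius #B : R)) *
        {m | ∀ B ∈ P.parts, ∀ i ∈ B, ∀ j ∈ B, m i = m j}.indicator g m =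
      {m | Function.Injective m}.indicator g m := by
  have h : ∀ P : Finpartition (univ : Finset ι), (∏ B ∈ P.parts, (partitionMobius #B : R)) *
      {m | ∀ B ∈ P.parts, ∀ i ∈ B, ∀ j ∈ B, m i = m j}.indicator g m =
        ((∏ B ∈ P.parts, blockWeight m B : ℤ) : R) * g m := by
    intro P
    simp only [blockWeight, Int.cast_prod, apply_ite (Int.cast : ℤ → R), Int.cast_zero,
      prod_ite_zero, Set.indicator_apply, Set.mem_ofPred_eq, mul_ite, ite_mul, mul_zero, zero_mul]
  have hinj : Set.InjOn m ↑(univ : Finset ι) ↔ Function.Injective m := by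
    rw [coe_univ, Set.injOn_univ]
  simp_rw [h, ← sum_mul, ← Int.cast_sum, sum_finpartition_prod_blockWeight]
  split_ifs with hm
  · rw [Set.indicator_of_mem (hinj.1 hm), Int.cast_one, one_mul]
  · rw [Set.indicator_of_notMem (mt hinj.2 hm), Int.cast_zero, zero_mul]

end Mobius

section PartitionSide

variable {ι : Type*} [Fintype ι] [DecidableEq ι] {s : ι → ℂ}

theorem prod_riemannZeta_parts_eq_tsum (hs : ∀ i, 1 < (s i).re)
    (P : Finpartition (univ : Finset ι)) :
    ∏ B ∈ P.parts, riemannZeta (∑ k ∈ B, s k) =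
      ∑' m, {m : ι → ℕ | ∀ B ∈ P.parts, ∀ i ∈ B, ∀ j ∈ B, m i = m j}.indicator
        (eulerZagierTerm s) m := by
  have hre : ∀ B : P.parts, 1 < (∑ k ∈ B.1, s k).re := by
    rintro ⟨B, hB⟩
    obtain ⟨a, ha⟩ := P.nonempty_of_mem_parts hB
    rw [re_sum]
    exact (hs a).trans_le (single_le_sum (fun k _ => (zero_lt_one.trans (hs k)).le) ha)
  rw [← P.range_liftParts, ← _root_.tsum_subtype, tsum_range _ P.liftParts_injective,
    ← prod_coe_sort]
  calc ∏ B : P.parts, riemannZeta (∑ k ∈ B.1, s k)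
      = ∏ B : P.parts, ∑' n : ℕ, (n : ℂ) ^ (-∑ k ∈ B.1, s k) :=
        prod_congr rfl fun B _ => (tsum_natCast_cpow_neg (hre B)).symm
    _ = ∑' v : P.parts → ℕ, ∏ B, (v B : ℂ) ^ (-∑ k ∈ B.1, s k) :=
        (tsum_prod_pi fun B => summable_norm_natCast_cpow_neg (hre B)).symm
    _ = ∑' v, eulerZagierTerm s (P.liftParts v) := tsum_congr fun v => by
        rw [eulerZagierTerm, P.prod_liftParts (fun i (n : ℕ) => (n : ℂ) ^ (-s i))]
        exact prod_congr rfl fun B _ => natCast_cpow_neg_sum (P.nonempty_of_mem_parts B.2)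
          (fun i _ => zero_lt_one.trans (hs i)) _

theorem sum_finpartition_eq_tsum_indicator_injective (hs : ∀ i, 1 < (s i).re) :
    ∑ P : Finpartition (univ : Finset ι), (-1 : ℂ) ^ (Fintype.card ι - #P.parts) *
        ∏ B ∈ P.parts, (((#B - 1).factorial : ℂ) * riemannZeta (∑ k ∈ B, s k)) =
      ∑' m, {m : ι → ℕ | Function.Injective m}.indicator (eulerZagierTerm s) m := by
  have hweight : ∀ P : Finpartition (univ : Finset ι), (-1 : ℂ) ^ (Fintype.card ι - #P.parts) *
      ∏ B ∈ P.parts, (((#B - 1).factorial : ℂ) * riemannZeta (∑ k ∈ B, s k)) =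
        (∏ B ∈ P.parts, (partitionMobius #B : ℂ)) * ∏ B ∈ P.parts, riemannZeta (∑ k ∈ B, s k) := by
    intro P
    rw [prod_mul_distrib, ← mul_assoc, ← card_univ]
    exact_mod_cast congrArg (· * ∏ B ∈ P.parts, riemannZeta (∑ k ∈ B, s k))
      (congrArg (Int.cast : ℤ → ℂ) (prod_partitionMobius_card P).symm)
  simp_rw [hweight, prod_riemannZeta_parts_eq_tsum hs, ← tsum_mul_left]
  rw [← Summable.tsum_finsetSum fun P _ => ((summable_eulerZagierTerm hs).indicator _).mul_left _]
  simp_rw [sum_finpartition_mul_indicator]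

end PartitionSide

theorem hoffman_relation_general (r : ℕ) (s : Fin r → ℂ)
    (hs : ∀ j, 1 < (s j).re) :
    ∑ σ : Equiv.Perm (Fin r), eulerZagierZeta r (fun i => s (σ i)) =
      ∑ P : Finpartition (Finset.univ : Finset (Fin r)),
        (-1 : ℂ) ^ (r - P.parts.card) *
          ∏ B ∈ P.parts,
            ((Nat.factorial (B.card - 1) : ℂ) * riemannZeta (∑ k ∈ B, s k)) := by
  rw [sum_perm_eulerZagierZeta hs, ← sum_finpartition_eq_tsum_indicator_injective hs,
    Fintype.card_fin]

/-- Hoffman's relation (symmetrized harmonic product formula): for `r ≥ 2` and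
`Re s_j > 1` for all `j`,
`∑_{σ ∈ S_r} ζ_r(s_{σ(1)},…,s_{σ(r)})
  = ∑_Π (−1)^{r−|Π|}(∏_{B∈Π}(|B|−1)!)·∏_{B∈Π} ζ(∑_{k∈B} s_k)`,
summed over all set partitions `Π` of `{1,…,r}`. -/
theorem hoffman_relation (r : ℕ) (hr : 2 ≤ r) (s : Fin r → ℂ)
    (hs : ∀ j, 1 < (s j).re) :
    ∑ σ : Equiv.Perm (Fin r), eulerZagierZeta r (fun i => s (σ i)) =
      ∑ P : Finpartition (Finset.univ : Finset (Fin r)),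
        (-1 : ℂ) ^ (r - P.parts.card) *
          ∏ B ∈ P.parts,
            ((Nat.factorial (B.card - 1) : ℂ) * riemannZeta (∑ k ∈ B, s k)) :=
  hoffman_relation_general r s hs
end
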